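/- arXiv:2403.03784 — 3 statements merged into one kernel-verified Lean document; each statement's English description precedes it below -/
import Mathlib

section
/- Let U ⊆ ℝ² be open and v : U → ℝ be smooth (C^∞). Then at every point of U, (|D²v|² − (Δv)²)|Dv|² = 2|D²v Dv|² − 2 Δ_∞v Δv, where Δ_∞v := ⟨D²v Dv, Dv⟩, |D²v|² is the squared Frobenius norm of the Hessian, and |D²v Dv| is the Euclidean norm of the Hessian applied to the gradient. -/
open Finset

/-- Partial derivative `∂f/∂xᵢ` at `x`. -/
noncomputable def pder {n : ℕ} (f : (Fin n → ℝ) → ℝ) (x : Fin n → ℝ) (i : Fin n) : ℝ :=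
  fderiv ℝ f x (Pi.single i 1)

/-- Gradient `Dv`. -/
noncomputable def grad {n : ℕ} (v : (Fin n → ℝ) → ℝ) (x : Fin n → ℝ) : Fin n → ℝ :=
  fun i => pder v x i

/-- Hessian `D²v`. -/
noncomputable def hess {n : ℕ} (v : (Fin n → ℝ) → ℝ) (x : Fin n → ℝ) : Fin n → Fin n → ℝ :=
  fun i j => pder (fun y => pder v y j) x i

lemma hess_symm {n : ℕ} (v : (Fin n → ℝ) → ℝ) (x : Fin n → ℝ)
    (h : ContDiffAt ℝ 2 v x) (i j : Fin n) : hess v x i j = hess v x j i := by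
  have hsymm := h.isSymmSndFDerivAt (by simp [minSmoothness_of_isRCLikeNormedField])
  have hdiff : DifferentiableAt ℝ (fderiv ℝ v) x := by
    have := (h.fderiv_right (m := 1) le_rfl).differentiableAt one_ne_zero
    exact this
  have key : ∀ a b : Fin n → ℝ,
      fderiv ℝ (fun y => fderiv ℝ v y b) x a = fderiv ℝ (fderiv ℝ v) x a b := by
    intro a b
    rw [fderiv_clm_apply hdiff (differentiableAt_const b)]
    simp
  simp only [hess, pder, key]
  exact hsymm _ _

/-- In dimension 2, for smooth `v`:
`(|D²v|² − (Δv)²)|Dv|² = 2|D²v Dv|² − 2 Δ_∞v Δv` pointwise in `U`. -/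
theorem fundamental_identity_dim2 (U : Set (Fin 2 → ℝ)) (hU : IsOpen U)
    (v : (Fin 2 → ℝ) → ℝ) (hv : ContDiffOn ℝ (⊤ : ℕ∞) v U) :
    ∀ x ∈ U,
      ((∑ i : Fin 2, ∑ j : Fin 2, hess v x i j ^ 2) - (∑ i : Fin 2, hess v x i i) ^ 2)
          * (∑ i : Fin 2, grad v x i ^ 2)
        = 2 * (∑ i : Fin 2, (∑ j : Fin 2, hess v x i j * grad v x j) ^ 2)
          - 2 * (∑ i : Fin 2, ∑ j : Fin 2, hess v x i j * grad v x i * grad v x j)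
              * (∑ i : Fin 2, hess v x i i) := by
  intro x hx
  have hca : ContDiffAt ℝ 2 v x :=
    ((hv x hx).contDiffAt (hU.mem_nhds hx)).of_le (WithTop.coe_le_coe.mpr le_top)
  have hsymm := hess_symm v x hca 0 1
  simp only [Fin.sum_univ_two]
  rw [hsymm]
  ring
end

section
/- Let n ≥ 3, U ⊆ ℝⁿ open and v : U → ℝ smooth. Then pointwise in U: (|D²v|² − (Δv)²)|Dv|⁴ ≥ (n/(n-1))|D²v Dv|²|Dv|² − ((n-2)/(n-1))(Δv)²|Dv|⁴ − (2/(n-1)) Δ_∞v Δv |Dv|² + ((n-2)/(n-1))(|D²v Dv|²|Dv|² − (Δ_∞v)²). -/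
open Finset

/-- The key Cauchy–Schwarz inequality: for a symmetric matrix `h` and vector `g`,
`(T s - Q)^2 ≤ (n-1) (A s^2 - 2 B s + Q^2)`. -/
lemma key_cs (n : ℕ) (h : Fin n → Fin n → ℝ) (g : Fin n → ℝ)
    (hsym : ∀ i j, h i j = h j i) :
    ((∑ i : Fin n, h i i) * (∑ i : Fin n, g i ^ 2)
        - (∑ i : Fin n, ∑ j : Fin n, h i j * g i * g j)) ^ 2
      ≤ ((n:ℝ) - 1) * ((∑ i : Fin n, ∑ j : Fin n, h i j ^ 2) * (∑ i : Fin n, g i ^ 2) ^ 2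
        - 2 * (∑ i : Fin n, (∑ j : Fin n, h i j * g j) ^ 2) * (∑ i : Fin n, g i ^ 2)
        + (∑ i : Fin n, ∑ j : Fin n, h i j * g i * g j) ^ 2) := by
  set s := ∑ i : Fin n, g i ^ 2 with hs_def
  set A := ∑ i : Fin n, ∑ j : Fin n, h i j ^ 2 with hA_def
  set T := ∑ i : Fin n, h i i with hT_def
  set p : Fin n → ℝ := fun i => ∑ j : Fin n, h i j * g j with hp_def
  set B := ∑ i : Fin n, (∑ j : Fin n, h i j * g j) ^ 2 with hB_def
  set Q := ∑ i : Fin n, ∑ j : Fin n, h i j * g i * g j with hQ_def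
  have hs0 : 0 ≤ s := Finset.sum_nonneg fun i _ => sq_nonneg _
  have hq : ∀ j, (∑ i : Fin n, h i j * g i) = p j := by
    intro j
    exact Finset.sum_congr rfl fun i _ => by rw [hsym]
  have hpi : ∀ i : Fin n, (∑ j : Fin n, h i j * g j) = p i := fun i => rfl
  have hBp : B = ∑ i : Fin n, p i ^ 2 := rfl
  have hQp : Q = ∑ i : Fin n, g i * p i := by
    rw [hQ_def]
    refine Finset.sum_congr rfl fun i _ => ?_
    rw [Finset.mul_sum]
    exact Finset.sum_congr rfl fun j _ => by ring
  have hQ' : (∑ i : Fin n, p i * g i) = Q := by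
    rw [hQp]; exact Finset.sum_congr rfl fun i _ => (mul_comm _ _)
  have hD4 : ∑ i : Fin n, g i * (∑ j : Fin n, h i j * p j) = B := by
    calc ∑ i : Fin n, g i * ∑ j : Fin n, h i j * p j
        = ∑ i : Fin n, ∑ j : Fin n, (h i j * g i) * p j := by
          refine Finset.sum_congr rfl fun i _ => ?_
          rw [Finset.mul_sum]; exact Finset.sum_congr rfl fun j _ => by ring
      _ = ∑ j : Fin n, ∑ i : Fin n, (h i j * g i) * p j := Finset.sum_comm
      _ = ∑ j : Fin n, p j * p j := by
          refine Finset.sum_congr rfl fun j _ => ?_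
          rw [← Finset.sum_mul, hq]
      _ = B := by rw [hBp]; exact Finset.sum_congr rfl fun j _ => (sq (p j)).symm
  rcases eq_or_lt_of_le hs0 with hs | hs
  · -- s = 0 : all g i = 0
    have hg : ∀ i, g i = 0 := by
      intro i
      have := (Finset.sum_eq_zero_iff_of_nonneg
        (fun i _ => sq_nonneg (g i))).mp hs.symm i (mem_univ i)
      exact pow_eq_zero_iff (by norm_num) |>.mp this
    have hQ0 : Q = 0 := by
      rw [hQp]; exact Finset.sum_eq_zero fun i _ => by rw [hg]; ring
    have hB0 : B = 0 := by
      rw [hBp]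
      refine Finset.sum_eq_zero fun i _ => ?_
      have : p i = 0 := Finset.sum_eq_zero fun j _ => by rw [hg]; ring
      rw [this]; ring
    rw [hQ0, hB0, ← hs]
    ring_nf
    positivity
  · -- s > 0
    set f : Fin n × Fin n → ℝ :=
      fun z => s * (if z.1 = z.2 then (1:ℝ) else 0) - g z.1 * g z.2 with hf_def
    set m : Fin n × Fin n → ℝ := fun z =>
      s^2 * h z.1 z.2 - s * g z.1 * p z.2 - s * p z.1 * g z.2 + Q * g z.1 * g z.2 with hm_def
    have CS := Finset.sum_mul_sq_le_sq_mul_sq Finset.univ f m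
    have Ef2 : ∑ z : Fin n × Fin n, f z ^ 2 = ((n:ℝ) - 1) * s ^ 2 := by
      rw [Fintype.sum_prod_type]
      have row : ∀ i : Fin n, ∑ j : Fin n, f (i, j) ^ 2 = s^2 - s * g i ^ 2 := by
        intro i
        have e1 : ∀ j : Fin n, f (i, j) ^ 2
            = (g i * g j)^2 + (if i = j then s^2 - 2*s*(g i * g j) else 0) := by
          intro j
          simp only [hf_def]
          by_cases hij : i = j
          · simp [hij]; ring
          · simp [hij]
        simp_rw [e1]
        rw [Finset.sum_add_distrib, Finset.sum_ite_eq univ i (fun j => s^2 - 2*s*(g i * g j))]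
        simp only [mem_univ, if_true]
        have : ∑ j : Fin n, (g i * g j)^2 = g i ^2 * s := by
          rw [hs_def, Finset.mul_sum]
          exact Finset.sum_congr rfl fun j _ => by ring
        rw [this]; ring
      simp_rw [row]
      rw [Finset.sum_sub_distrib, Finset.sum_const, ← Finset.mul_sum, ← hs_def]
      simp [Finset.card_univ]
      ring
    have Efm : ∑ z : Fin n × Fin n, f z * m z = s ^ 2 * (T * s - Q) := by
      rw [Fintype.sum_prod_type]
      have rowfm : ∀ i : Fin n, ∑ j : Fin n, f (i, j) * m (i, j)
          = s*(s^2*h i i - s*(g i*p i) - s*(p i*g i) + Q*g i^2) := by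
        intro i
        have e : ∀ j : Fin n, f (i, j) * m (i, j)
            = (if i = j then s*(s^2*h i j - s*(g i*p j) - s*(p i*g j) + Q*(g i*g j)) else 0)
              + ((-(s^2*g i))*(h i j*g j) + (s*g i^2)*(p j*g j)
                + (s*(p i*g i))*(g j^2) - (Q*g i^2)*(g j^2)) := by
          intro j
          simp only [hf_def, hm_def]
          by_cases hij : i = j
          · simp [hij]; ring
          · simp [hij]; ring
        simp_rw [e]
        rw [Finset.sum_add_distrib, Finset.sum_ite_eq, Finset.sum_sub_distrib,
          Finset.sum_add_distrib, Finset.sum_add_distrib,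
          ← Finset.mul_sum, ← Finset.mul_sum, ← Finset.mul_sum, ← Finset.mul_sum,
          hpi, hQ', ← hs_def]
        simp only [mem_univ, if_true]
        ring
      simp_rw [rowfm]
      rw [← Finset.mul_sum, Finset.sum_add_distrib, Finset.sum_sub_distrib,
        Finset.sum_sub_distrib, ← Finset.mul_sum, ← Finset.mul_sum, ← Finset.mul_sum,
        ← hT_def, ← hQp, hQ', ← Finset.mul_sum, ← hs_def]
      ring
    have Em2 : ∑ z : Fin n × Fin n, m z ^ 2 = s^2 * (A * s^2 - 2 * B * s + Q^2) := by
      rw [Fintype.sum_prod_type]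
      have rowm : ∀ i : Fin n, ∑ j : Fin n, m (i, j) ^ 2
          = s^4 * (∑ j : Fin n, h i j ^ 2) + (s^2 * g i^2) * B
            + (s^2 * p i^2 + Q^2 * g i^2 - 2*s*Q*(p i * g i)) * s
            + (-(2*s^3)) * (g i * (∑ j : Fin n, h i j * p j))
            + ((-(2*s^3)) * p i^2 + 2*s^2*Q*(g i * p i))
            + (2*s^2*(g i * p i) - 2*s*Q*g i^2) * Q := by
        intro i
        have e : ∀ j : Fin n, m (i, j) ^ 2
            = s^4 * h i j ^2 + (s^2 * g i^2) * p j ^2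
              + (s^2 * p i^2 + Q^2 * g i^2 - 2*s*Q*(p i * g i)) * g j ^2
              + (-(2*s^3*g i)) * (h i j * p j)
              + (-(2*s^3*p i) + 2*s^2*Q*g i) * (h i j * g j)
              + (2*s^2*(g i * p i) - 2*s*Q*g i^2) * (p j * g j) := by
          intro j; simp only [hm_def]; ring
        simp_rw [e]
        simp only [Finset.sum_add_distrib, ← Finset.mul_sum]
        rw [← hBp, ← hs_def, hpi, hQ']
        ring
      simp_rw [rowm]
      simp only [Finset.sum_add_distrib]
      have t1 : ∑ i : Fin n, s^4 * (∑ j : Fin n, h i j ^ 2)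
          = s^4 * ∑ i : Fin n, ∑ j : Fin n, h i j ^ 2 := by rw [Finset.mul_sum]
      have t2 : ∑ i : Fin n, (s^2 * g i^2) * B = s^2 * s * B := by
        rw [← Finset.sum_mul, ← Finset.mul_sum, ← hs_def]
      have t3 : ∑ i : Fin n, (s^2 * p i^2 + Q^2 * g i^2 - 2*s*Q*(p i * g i)) * s
          = (s^2 * B + Q^2 * s - 2*s*Q*Q) * s := by
        rw [← Finset.sum_mul, Finset.sum_sub_distrib, Finset.sum_add_distrib,
          ← Finset.mul_sum, ← Finset.mul_sum, ← Finset.mul_sum, ← hBp, ← hs_def, hQ']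
      have t4 : ∑ i : Fin n, (-(2*s^3)) * (g i * (∑ j : Fin n, h i j * p j))
          = (-(2*s^3)) * B := by rw [← Finset.mul_sum, hD4]
      have t5a : ∑ i : Fin n, (-(2*s^3)) * p i^2 = (-(2*s^3)) * B := by
        rw [← Finset.mul_sum, ← hBp]
      have t5b : ∑ i : Fin n, 2*s^2*Q*(g i * p i) = 2*s^2*Q*Q := by
        rw [← Finset.mul_sum, ← hQp]
      have t6 : ∑ i : Fin n, (2*s^2*(g i * p i) - 2*s*Q*g i^2) * Q
          = (2*s^2*Q - 2*s*Q*s) * Q := by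
        rw [← Finset.sum_mul, Finset.sum_sub_distrib, ← Finset.mul_sum, ← Finset.mul_sum,
          ← hQp, ← hs_def]
      rw [t1, t2, t3, t4, t5a, t5b, t6, ← hA_def]
      ring
    have CS' : s^4 * (T * s - Q)^2 ≤ s^4 * (((n:ℝ)-1) * (A*s^2 - 2*B*s + Q^2)) := by
      calc s^4 * (T * s - Q)^2 = (∑ z : Fin n × Fin n, f z * m z)^2 := by rw [Efm]; ring
        _ ≤ (∑ z : Fin n × Fin n, f z ^ 2) * (∑ z : Fin n × Fin n, m z ^ 2) := CS
        _ = s^4 * (((n:ℝ)-1) * (A*s^2 - 2*B*s + Q^2)) := by rw [Ef2, Em2]; ring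
    have := le_of_mul_le_mul_left CS' (by positivity : (0:ℝ) < s^4)
    linarith

/-- Fundamental inequality for `Δv·Δ_∞v` in dimension `n ≥ 3`. -/
theorem fundamental_inequality_dim_ge3 (n : ℕ) (hn : 3 ≤ n)
    (U : Set (Fin n → ℝ)) (hU : IsOpen U)
    (v : (Fin n → ℝ) → ℝ) (hv : ContDiffOn ℝ (⊤ : ℕ∞) v U) :
    ∀ x ∈ U,
      ((∑ i : Fin n, ∑ j : Fin n, hess v x i j ^ 2) - (∑ i : Fin n, hess v x i i) ^ 2)
          * (∑ i : Fin n, grad v x i ^ 2) ^ 2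
        ≥ ((n : ℝ) / ((n : ℝ) - 1))
              * (∑ i : Fin n, (∑ j : Fin n, hess v x i j * grad v x j) ^ 2)
              * (∑ i : Fin n, grad v x i ^ 2)
          - (((n : ℝ) - 2) / ((n : ℝ) - 1)) * (∑ i : Fin n, hess v x i i) ^ 2
              * (∑ i : Fin n, grad v x i ^ 2) ^ 2
          - (2 / ((n : ℝ) - 1))
              * (∑ i : Fin n, ∑ j : Fin n, hess v x i j * grad v x i * grad v x j)
              * (∑ i : Fin n, hess v x i i) * (∑ i : Fin n, grad v x i ^ 2)
          + (((n : ℝ) - 2) / ((n : ℝ) - 1))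
              * ((∑ i : Fin n, (∑ j : Fin n, hess v x i j * grad v x j) ^ 2)
                    * (∑ i : Fin n, grad v x i ^ 2)
                - (∑ i : Fin n, ∑ j : Fin n, hess v x i j * grad v x i * grad v x j) ^ 2) := by
  intro x hx
  have hsym : ∀ i j, hess v x i j = hess v x j i := by
    intro i j
    have hvx : ContDiffAt ℝ (⊤ : ℕ∞) v x := hv.contDiffAt (hU.mem_nhds hx)
    have hsymm := hvx.isSymmSndFDerivAt ((by rw [minSmoothness_of_isRCLikeNormedField]; exact WithTop.coe_le_coe.mpr (le_top : (2:ℕ∞) ≤ ⊤)))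
    have hdiff : DifferentiableAt ℝ (fderiv ℝ v) x :=
      (hvx.fderiv_right (m := 1) (WithTop.coe_le_coe.mpr le_top)).differentiableAt one_ne_zero
    have key : ∀ c w : Fin n → ℝ,
        fderiv ℝ (fun y => fderiv ℝ v y c) x w = fderiv ℝ (fderiv ℝ v) x w c := by
      intro c w
      rw [fderiv_clm_apply hdiff (differentiableAt_const c)]
      simp
    simp only [hess, pder]
    rw [key, key, hsymm.eq]
  set h := hess v x
  set g := grad v x
  have hn' : (3:ℝ) ≤ (n:ℝ) := by exact_mod_cast hn
  have hc : (0:ℝ) < (n:ℝ) - 1 := by linarith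
  set s := ∑ i : Fin n, g i ^ 2 with hs_def
  set A := ∑ i : Fin n, ∑ j : Fin n, h i j ^ 2 with hA_def
  set T := ∑ i : Fin n, h i i with hT_def
  set B := ∑ i : Fin n, (∑ j : Fin n, h i j * g j) ^ 2 with hB_def
  set Q := ∑ i : Fin n, ∑ j : Fin n, h i j * g i * g j with hQ_def
  have key : (T * s - Q) ^ 2 ≤ ((n:ℝ) - 1) * (A * s ^ 2 - 2 * B * s + Q ^ 2) := by
    have := key_cs n h g hsym
    rw [← hs_def, ← hA_def, ← hT_def, ← hB_def, ← hQ_def] at this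
    linarith
  rw [ge_iff_le, ← sub_nonneg]
  have expand : ((A - T ^ 2) * s ^ 2) -
      (((n : ℝ) / ((n : ℝ) - 1)) * B * s
        - (((n : ℝ) - 2) / ((n : ℝ) - 1)) * T ^ 2 * s ^ 2
        - (2 / ((n : ℝ) - 1)) * Q * T * s
        + (((n : ℝ) - 2) / ((n : ℝ) - 1)) * (B * s - Q ^ 2))
      = (((n:ℝ) - 1) * (A * s ^ 2 - 2 * B * s + Q ^ 2) - (T * s - Q) ^ 2) / ((n:ℝ) - 1) := by
    field_simp
    ring
  rw [expand]
  exact div_nonneg (by linarith) hc.le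
end

section
/- Let n ≥ 2, 1 < t₋ ≤ t₊ < ∞, β > β⋆(n,t₊) with β⋆(n,t₊) = -1 + (n-2)(t₊-1)/(2(n-1)). Then for every τ > 1, p ∈ [t₋, t₊], and η with 0 < η < (1/2)min{1+β, ((n-1)/(-2β))(β − β⋆(n,t₊))} if β < 0 (or any η > 0 if β ≥ 0), the quantity τK₂ := (p−2+τ)[(n−1+2η)β + (n−1)τ − ((n−2)/2)(p−2+τ)] − η(p−2)² satisfies τK₂ ≥ (1/2)(n−1)(t₋−1)(β − β⋆(n,t₊)) − η max{(t₋−2)², (t₊−2)²}. -/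
/-- `β⋆(n,t) = -1 + (n-2)(t-1)/(2(n-1))`. -/
noncomputable def betaStar (n : ℕ) (t : ℝ) : ℝ :=
  -1 + ((n : ℝ) - 2) * (t - 1) / (2 * ((n : ℝ) - 1))

set_option maxHeartbeats 1000000 in
/-- The key algebraic inequality for `τK₂` in Step 4 of the proof of Lemma 3.1. -/
theorem tauK2_lower_bound (n : ℕ) (hn : 2 ≤ n) (tm tp : ℝ)
    (htm : 1 < tm) (htmp : tm ≤ tp) (β : ℝ) (hβ : betaStar n tp < β)
    (τ : ℝ) (hτ : 1 < τ) (p : ℝ) (hp : p ∈ Set.Icc tm tp)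
    (η : ℝ) (hη : 0 < η)
    (hηβ : β < 0 →
      η < (1 / 2) * min (1 + β) (((n : ℝ) - 1) / (-2 * β) * (β - betaStar n tp))) :
    (p - 2 + τ) * (((n : ℝ) - 1 + 2 * η) * β + ((n : ℝ) - 1) * τ
          - (((n : ℝ) - 2) / 2) * (p - 2 + τ))
        - η * (p - 2) ^ 2
      ≥ (1 / 2) * ((n : ℝ) - 1) * (tm - 1) * (β - betaStar n tp)
        - η * max ((tm - 2) ^ 2) ((tp - 2) ^ 2) := by
  obtain ⟨hp1, hp2⟩ := hp
  have hn2 : (2:ℝ) ≤ (n:ℝ) := by exact_mod_cast hn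
  have hN : (1:ℝ) ≤ (n:ℝ) - 1 := by linarith
  have hden : (2 * ((n:ℝ) - 1)) ≠ 0 := by positivity
  have hβ' : 0 < β - betaStar n tp := by linarith
  -- rewrite β⋆ relation
  have hbs : ((n:ℝ) - 1) * (β - betaStar n tp)
      = ((n:ℝ) - 1) * (β + 1) - ((n:ℝ) - 2) * (tp - 1) / 2 := by
    unfold betaStar
    field_simp
    ring
  -- F lower bound
  have hF : ((n:ℝ) - 1 + 2 * η) * β + ((n:ℝ) - 1) * τ - (((n:ℝ) - 2) / 2) * (p - 2 + τ)
      ≥ (1/2) * ((n:ℝ) - 1) * (β - betaStar n tp) := by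
    rcases le_or_gt 0 β with hb | hb
    · nlinarith [mul_nonneg (le_of_lt hη) hb, mul_nonneg (by linarith : (0:ℝ) ≤ (n:ℝ) - 2) (by linarith : (0:ℝ) ≤ tp - p)]
    · have hη2 := hηβ hb
      have hη3 : η < (1/2) * (((n:ℝ) - 1) / (-2 * β) * (β - betaStar n tp)) := by
        calc η < (1/2) * min (1 + β) (((n:ℝ) - 1) / (-2 * β) * (β - betaStar n tp)) := hη2
        _ ≤ _ := by
          have := min_le_right (1 + β) (((n:ℝ) - 1) / (-2 * β) * (β - betaStar n tp))
          linarith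
      have hb2 : (0:ℝ) < -2 * β := by linarith
      -- 2 η (−β) < ((n−1)/2)(β − β⋆)
      have key : 2 * η * (-β) < ((n:ℝ) - 1) / 2 * (β - betaStar n tp) := by
        have h4 : η * (-2 * β) < (1/2) * (((n:ℝ) - 1) / (-2 * β) * (β - betaStar n tp)) * (-2 * β) := by
          exact mul_lt_mul_of_pos_right hη3 hb2
        have h5 : (1/2) * (((n:ℝ) - 1) / (-2 * β) * (β - betaStar n tp)) * (-2 * β)
            = ((n:ℝ) - 1) / 2 * (β - betaStar n tp) := by
          field_simp [hb.ne]
        nlinarith [h4, h5]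
      have hA : (0:ℝ) ≤ ((n:ℝ) - 2) * (tp - p) :=
        mul_nonneg (by linarith) (by linarith)
      have hB : (0:ℝ) ≤ ((n:ℝ) / 2) * (τ - 1) :=
        mul_nonneg (by linarith) (by linarith)
      nlinarith [key, hA, hB]
  -- s bound
  have hs : tm - 1 ≤ p - 2 + τ := by linarith
  have hspos : (0:ℝ) < tm - 1 := by linarith
  have hFpos : (0:ℝ) ≤ (1/2) * ((n:ℝ) - 1) * (β - betaStar n tp) := by positivity
  -- product bound
  have hprod : (p - 2 + τ) * (((n:ℝ) - 1 + 2 * η) * β + ((n:ℝ) - 1) * τ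
      - (((n:ℝ) - 2) / 2) * (p - 2 + τ))
      ≥ (tm - 1) * ((1/2) * ((n:ℝ) - 1) * (β - betaStar n tp)) := by
    have := mul_le_mul hs (by linarith [hF] : (1/2) * ((n:ℝ) - 1) * (β - betaStar n tp)
        ≤ ((n:ℝ) - 1 + 2 * η) * β + ((n:ℝ) - 1) * τ - (((n:ℝ) - 2) / 2) * (p - 2 + τ))
      hFpos (by linarith)
    linarith
  -- max bound
  have hmax : (p - 2) ^ 2 ≤ max ((tm - 2) ^ 2) ((tp - 2) ^ 2) := by
    rcases le_total p 2 with h | h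
    · have h1 : (p - 2) ^ 2 ≤ (tm - 2) ^ 2 := by nlinarith
      exact h1.trans (le_max_left _ _)
    · have h1 : (p - 2) ^ 2 ≤ (tp - 2) ^ 2 := by nlinarith
      exact h1.trans (le_max_right _ _)
  have hηmax : η * (p - 2) ^ 2 ≤ η * max ((tm - 2) ^ 2) ((tp - 2) ^ 2) :=
    mul_le_mul_of_nonneg_left hmax (le_of_lt hη)
  linarith [hprod, hηmax]
end
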